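/- Non-realizability of atomic types (consistency): there is no pure metaterm M of λ→m such that ⟨𝐚⟩M reduces in zero or more steps to ⋆, for any atomic type 𝐚. -/

import Mathlib

/-! The metacalculus λ→m for minimal logic: untyped λ-calculus extended with
a success constant ⋆, a guard construct (M; N), and generators ✠𝐚 / verifiers ⟨𝐚⟩
for atomic types. Terms use de Bruijn indices. -/

/-- Simple types: atomic types and arrows. -/
inductive Ty : Type
  | atom : ℕ → Ty
  | arrow : Ty → Ty → Ty

/-- Metaterms of the metacalculus λ→m (de Bruijn indices). -/
inductive Tm : Type
  | var : ℕ → Tm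
  | lam : Tm → Tm
  | app : Tm → Tm → Tm
  | star : Tm
  | guard : Tm → Tm → Tm
  | gen : ℕ → Tm
  | verif : ℕ → Tm → Tm

namespace Tm

/-- Shift de Bruijn indices ≥ c by d. -/
def shift (d c : ℕ) : Tm → Tm
  | var n => if n < c then var n else var (n + d)
  | lam M => lam (shift d (c+1) M)
  | app M N => app (shift d c M) (shift d c N)
  | star => star
  | guard M N => guard (shift d c M) (shift d c N)
  | gen a => gen a
  | verif a M => verif a (shift d c M)

/-- Capture-avoiding substitution of the variable k by N. -/
def subst (k : ℕ) (N : Tm) : Tm → Tm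
  | var n => if n = k then N else if k < n then var (n - 1) else var n
  | lam M => lam (subst (k+1) (shift 1 0 N) M)
  | app M P => app (subst k N M) (subst k N P)
  | star => star
  | guard M P => guard (subst k N M) (subst k N P)
  | gen a => gen a
  | verif a M => verif a (subst k N M)

/-- Pure metaterms: only variables, abstractions and applications. -/
def Pure : Tm → Prop
  | var _ => True
  | lam M => Pure M
  | app M N => Pure M ∧ Pure N
  | _ => False

end Tm

/-- One-step reduction of λ→m, closed under arbitrary contexts. -/
inductive Step : Tm → Tm → Prop
  | beta (M N : Tm) : Step (.app (.lam M) N) (Tm.subst 0 N M)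
  | guardStar (M : Tm) : Step (.guard .star M) M
  | verifGen (a : ℕ) : Step (.verif a (.gen a)) .star
  | lam {M M'} : Step M M' → Step (.lam M) (.lam M')
  | appL {M M'} (N) : Step M M' → Step (.app M N) (.app M' N)
  | appR {N N'} (M) : Step N N' → Step (.app M N) (.app M N')
  | guardL {M M'} (N) : Step M M' → Step (.guard M N) (.guard M' N)
  | guardR {N N'} (M) : Step N N' → Step (.guard M N) (.guard M N')
  | verif {M M'} (a) : Step M M' → Step (.verif a M) (.verif a M')

/-- Weak head reduction of λ→m: the rules closed under weak head contexts only. -/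
inductive WStep : Tm → Tm → Prop
  | beta (M N : Tm) : WStep (.app (.lam M) N) (Tm.subst 0 N M)
  | guardStar (M : Tm) : WStep (.guard .star M) M
  | verifGen (a : ℕ) : WStep (.verif a (.gen a)) .star
  | appL {M M'} (N) : WStep M M' → WStep (.app M N) (.app M' N)
  | guardL {M M'} (N) : WStep M M' → WStep (.guard M N) (.guard M' N)
  | verif {M M'} (a) : WStep M M' → WStep (.verif a M) (.verif a M')

/-- β-reduction alone, closed under arbitrary contexts. -/
inductive BStep : Tm → Tm → Prop
  | beta (M N : Tm) : BStep (.app (.lam M) N) (Tm.subst 0 N M)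
  | lam {M M'} : BStep M M' → BStep (.lam M) (.lam M')
  | appL {M M'} (N) : BStep M M' → BStep (.app M N) (.app M' N)
  | appR {N N'} (M) : BStep N N' → BStep (.app M N) (.app M N')
  | guardL {M M'} (N) : BStep M M' → BStep (.guard M N) (.guard M' N)
  | guardR {N N'} (M) : BStep N N' → BStep (.guard M N) (.guard M N')
  | verif {M M'} (a) : BStep M M' → BStep (.verif a M) (.verif a M')

mutual
/-- The generator ✠A for an arbitrary simple type A. -/
def genT : Ty → Tm
  | .atom a => .gen a
  | .arrow A B => .lam (.guard (verifT A (.var 0)) (genT B))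
/-- The verifier ⟨A⟩M for an arbitrary simple type A applied to M. -/
def verifT : Ty → Tm → Tm
  | .atom a, M => .verif a M
  | .arrow A B, M => verifT B (.app M (genT A))
end

/-! A reduct of ⟨𝐚⟩M is either ⟨𝐚⟩M' with M ↠ M', or ⋆, and the latter only after M has
reached ✠𝐚; so ⟨𝐚⟩M ↠ ⋆ forces M ↠ ✠𝐚. But pure terms are closed under substitution, hence
under reduction, and ✠𝐚 is not pure. -/

open Relation

namespace Tm

theorem Pure.shift {M : Tm} (h : M.Pure) (d c : ℕ) : (M.shift d c).Pure := by
  induction M generalizing c with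
  | var n => simp only [Tm.shift]; split <;> trivial
  | lam M ih => exact ih h (c + 1)
  | app M N ihM ihN => exact ⟨ihM h.1 c, ihN h.2 c⟩
  | _ => cases h

theorem Pure.subst {M N : Tm} (hM : M.Pure) (hN : N.Pure) (k : ℕ) : (Tm.subst k N M).Pure := by
  induction M generalizing k N with
  | var n =>
    simp only [Tm.subst]
    split
    · exact hN
    · split <;> trivial
  | lam M ih => exact ih hM (hN.shift 1 0) (k + 1)
  | app M P ihM ihP => exact ⟨ihM hM.1 hN k, ihP hM.2 hN k⟩
  | _ => cases hM

theorem Pure.step {M M' : Tm} (hM : M.Pure) (h : Step M M') : M'.Pure := by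
  induction h with
  | beta M N => exact Tm.Pure.subst (M := M) hM.1 hM.2 0
  | lam _ ih => exact ih hM
  | appL N _ ih => exact ⟨ih hM.1, hM.2⟩
  | appR M _ ih => exact ⟨hM.1, ih hM.2⟩
  | _ => cases hM

theorem Pure.reflTransGen {M M' : Tm} (hM : M.Pure) (h : ReflTransGen Step M M') : M'.Pure := by
  induction h with
  | refl => exact hM
  | tail _ hstep ih => exact ih.step hstep

end Tm

namespace Step

theorem reflTransGen_verif_cases {a : ℕ} {M X : Tm} (h : ReflTransGen Step (.verif a M) X) :
    (∃ M', ReflTransGen Step M M' ∧ X = .verif a M') ∨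
      (ReflTransGen Step M (.gen a) ∧ X = .star) := by
  induction h with
  | refl => exact .inl ⟨M, .refl, rfl⟩
  | tail _ hstep ih =>
    rcases ih with ⟨M', hM', rfl⟩ | ⟨-, rfl⟩
    · cases hstep with
      | verifGen => exact .inr ⟨hM', rfl⟩
      | verif _ hs => exact .inl ⟨_, hM'.tail hs, rfl⟩
    · cases hstep

theorem reflTransGen_gen_of_verif_star {a : ℕ} {M : Tm}
    (h : ReflTransGen Step (.verif a M) .star) : ReflTransGen Step M (.gen a) := by
  rcases reflTransGen_verif_cases h with ⟨_, _, hstar⟩ | ⟨hgen, -⟩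
  · cases hstar
  · exact hgen

end Step

/-- Consistency / non-realizability of atomic types: there is no
pure metaterm M with ⟨𝐚⟩M ↠ ⋆, for any atomic type 𝐚. -/
theorem atomic_not_realizable (a : ℕ) (M : Tm) (hpure : Tm.Pure M) :
    ¬ Relation.ReflTransGen Step (Tm.verif a M) Tm.star := fun h =>
  hpure.reflTransGen (Step.reflTransGen_gen_of_verif_star h)
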